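/- (Tail estimate, abstract form) Let λ ≥ 1 and suppose S is a set of integer tuples (a,b,c,d,e) with a,e ≠ 0, |a| ≤ λ^4/t^4, |b| ≤ λ^4/t^2, |c| ≤ λ^4, |d| ≤ t^2 λ^4, |e| ≤ t^4 λ^4 (for some t ≥ 1) and satisfying 12ae - 3bd + c^2 = 0. Then #S = O_ε(λ^{12+ε}) for every ε > 0, with implied constant independent of t. -/

import Mathlib

/-!
Since `a ≠ 0`, the equation `12ae = 3bd - c²` determines `e` from `(b, c, d, a)`, and `a` is a
divisor of `3bd - c²`, which is nonzero (as `e ≠ 0`) and of size at most `4λ⁸`. The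
`(b, c, d)`-box has `O(λ¹²)` points whatever `t` is, and the divisor bound `τ(n) ≪_δ n^δ` leaves
`O_ε(λ^ε)` choices of `a` for each of them.
-/

open Finset

lemma succ_le_mul_pow_of_one_lt {x : ℝ} (hx : 1 < x) (a : ℕ) :
    (a + 1 : ℝ) ≤ max 1 (x - 1)⁻¹ * x ^ a := by
  have hK : (1 : ℝ) ≤ max 1 (x - 1)⁻¹ := le_max_left _ _
  have hKx : 1 ≤ max 1 (x - 1)⁻¹ * (x - 1) := by
    calc (1 : ℝ) = (x - 1)⁻¹ * (x - 1) := (inv_mul_cancel₀ (sub_pos.mpr hx).ne').symm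
      _ ≤ _ := mul_le_mul_of_nonneg_right (le_max_right _ _) (by linarith)
  have bernoulli : 1 + a * (x - 1) ≤ x ^ a := by
    simpa using one_add_mul_le_pow (a := x - 1) (by linarith) a
  have ha : (0 : ℝ) ≤ a := a.cast_nonneg
  nlinarith

lemma succ_le_pow_of_two_le {x : ℝ} (hx : 2 ≤ x) (a : ℕ) : (a + 1 : ℝ) ≤ x ^ a :=
  calc (a + 1 : ℝ) ≤ 2 ^ a := by exact_mod_cast Nat.lt_two_pow_self
    _ ≤ x ^ a := by gcongr

theorem Nat.card_divisors_le_mul_rpow {δ : ℝ} (hδ : 0 < δ) :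
    ∃ C > 0, ∀ n : ℕ, (#n.divisors : ℝ) ≤ C * (n : ℝ) ^ δ := by
  set K : ℝ := max 1 ((2 : ℝ) ^ δ - 1)⁻¹
  set P : ℕ := ⌈(2 : ℝ) ^ δ⁻¹⌉₊
  have hK : 1 ≤ K := le_max_left _ _
  refine ⟨K ^ P, by positivity, fun n => ?_⟩
  rcases eq_or_ne n 0 with rfl | hn
  · simp [Real.zero_rpow hδ.ne']
  -- only the primes `p < P` can have `p ^ δ < 2`, and each of them costs a factor `K`
  have local_bound : ∀ p ∈ n.primeFactors, ((n.factorization p + 1 : ℕ) : ℝ) ≤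
      (if p < P then K else 1) * ((p : ℝ) ^ δ) ^ n.factorization p := by
    intro p hp
    have hp2 : (2 : ℝ) ≤ p := by exact_mod_cast (Nat.prime_of_mem_primeFactors hp).two_le
    rw [Nat.cast_succ]
    split_ifs with hpP
    · calc _ ≤ K * ((2 : ℝ) ^ δ) ^ n.factorization p :=
            succ_le_mul_pow_of_one_lt (Real.one_lt_rpow (by norm_num) hδ) _
        _ ≤ _ := by gcongr
    · rw [one_mul]
      refine succ_le_pow_of_two_le ?_ _
      calc (2 : ℝ) = ((2 : ℝ) ^ δ⁻¹) ^ δ := (Real.rpow_inv_rpow (by norm_num) hδ.ne').symm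
        _ ≤ (P : ℝ) ^ δ := by gcongr; exact Nat.le_ceil _
        _ ≤ (p : ℝ) ^ δ := by gcongr; exact_mod_cast not_lt.mp hpP
  have small_primes : ∏ p ∈ n.primeFactors, (if p < P then K else 1) ≤ K ^ P := by
    rw [prod_ite, prod_const, prod_const_one, mul_one]
    refine pow_le_pow_right₀ hK ((card_le_card fun p hp => ?_).trans (card_range P).le)
    exact mem_range.mpr (mem_filter.mp hp).2
  have prod_eq : ∏ p ∈ n.primeFactors, ((p : ℝ) ^ δ) ^ n.factorization p = (n : ℝ) ^ δ := by
    simp_rw [← Real.rpow_mul_natCast (Nat.cast_nonneg _), mul_comm δ,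
      Real.rpow_natCast_mul (Nat.cast_nonneg _)]
    rw [Real.finsetProd_rpow _ _ (fun p _ => by positivity)]
    exact_mod_cast congrArg (fun m : ℕ => (m : ℝ) ^ δ)
      (Nat.prod_primeFactors_pow_factorization hn).symm
  calc (#n.divisors : ℝ) = ∏ p ∈ n.primeFactors, ((n.factorization p + 1 : ℕ) : ℝ) := by
        rw [Nat.card_divisors hn]; push_cast; rfl
    _ ≤ ∏ p ∈ n.primeFactors, (if p < P then K else 1) * ((p : ℝ) ^ δ) ^ n.factorization p :=
        prod_le_prod (fun _ _ => by positivity) local_bound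
    _ ≤ K ^ P * (n : ℝ) ^ δ := by
        rw [prod_mul_distrib, prod_eq]; gcongr

theorem Int.card_divisors (z : ℤ) : #z.divisors = 2 * #z.natAbs.divisors := by
  rw [Int.divisors, card_disjUnion, card_map, card_map, two_mul]

theorem Int.card_divisors_le_mul_rpow {δ : ℝ} (hδ : 0 < δ) :
    ∃ C > 0, ∀ z : ℤ, (#z.divisors : ℝ) ≤ C * |(z : ℝ)| ^ δ := by
  obtain ⟨C, hC, hbound⟩ := Nat.card_divisors_le_mul_rpow hδ
  refine ⟨2 * C, by positivity, fun z => ?_⟩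
  rw [Int.card_divisors, Nat.cast_mul, Nat.cast_two, mul_assoc, ← Int.cast_abs,
    ← Int.natCast_natAbs, Int.cast_natCast]
  gcongr
  exact hbound _

noncomputable def intsAbsLe (x : ℝ) : Finset ℤ := Icc (-⌊x⌋) ⌊x⌋

lemma mem_intsAbsLe {x : ℝ} {b : ℤ} : b ∈ intsAbsLe x ↔ |(b : ℝ)| ≤ x := by
  rw [intsAbsLe, mem_Icc, neg_le, Int.le_floor, Int.le_floor, abs_le, Int.cast_neg, neg_le,
    and_comm]

lemma card_intsAbsLe_le {x : ℝ} (hx : 1 ≤ x) : (#(intsAbsLe x) : ℝ) ≤ 3 * x := by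
  have hfloor : (0 : ℤ) ≤ ⌊x⌋ := Int.floor_nonneg.mpr (by linarith)
  rw [intsAbsLe, Int.card_Icc, show ⌊x⌋ + 1 - -⌊x⌋ = 2 * ⌊x⌋ + 1 by ring,
    ← Int.cast_natCast, Int.toNat_of_nonneg (by omega)]
  push_cast
  linarith [Int.floor_le x]

theorem Set.ncard_le_card_mul_of_injOn {α β γ : Type*} [DecidableEq β] [DecidableEq γ]
    {S : Set α} (f : α → β × γ) (hf : S.InjOn f) (B : Finset β) (D : β → Finset γ) {N : ℝ}
    (hmem : ∀ v ∈ S, (f v).1 ∈ B ∧ (f v).2 ∈ D (f v).1) (hD : ∀ p ∈ B, (#(D p) : ℝ) ≤ N) :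
    (S.ncard : ℝ) ≤ #B * N := by
  set T := B.biUnion fun p => (D p).map ⟨Prod.mk p, Prod.mk_right_injective p⟩
  have hST : f '' S ⊆ T := by
    rintro _ ⟨v, hv, rfl⟩
    obtain ⟨hB, hD⟩ := hmem v hv
    exact Finset.mem_coe.mpr (Finset.mem_biUnion.mpr ⟨_, hB, Finset.mem_map.mpr ⟨_, hD, rfl⟩⟩)
  calc (S.ncard : ℝ) = (f '' S).ncard := by rw [hf.ncard_image]
    _ ≤ #T := by
        exact_mod_cast (Set.ncard_le_ncard hST T.finite_toSet).trans_eq (Set.ncard_coe_finset T)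
    _ ≤ ∑ p ∈ B, (#(D p) : ℝ) := by
        exact_mod_cast card_biUnion_le.trans_eq (sum_congr rfl fun p _ => card_map _)
    _ ≤ #B * N := by simpa using sum_le_sum hD

noncomputable def skewBox (X T : ℝ) : Finset (ℤ × ℤ × ℤ) :=
  intsAbsLe (X / T) ×ˢ intsAbsLe X ×ˢ intsAbsLe (T * X)

lemma mk_mem_skewBox {X T : ℝ} {b c d : ℤ} :
    (b, c, d) ∈ skewBox X T ↔ |(b : ℝ)| ≤ X / T ∧ |(c : ℝ)| ≤ X ∧ |(d : ℝ)| ≤ T * X := by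
  simp only [skewBox, mem_product, mem_intsAbsLe]

lemma card_skewBox_le {X T : ℝ} (hT : 1 ≤ T) (hXT : 1 ≤ X / T) :
    (#(skewBox X T) : ℝ) ≤ 27 * X ^ 3 := by
  have hX : 1 ≤ X := hT.trans ((one_le_div (by linarith)).mp hXT)
  have hTX : 1 ≤ T * X := one_le_mul_of_one_le_of_one_le hT hX
  rw [skewBox, card_product, card_product, Nat.cast_mul, Nat.cast_mul]
  calc _ ≤ (3 * (X / T)) * ((3 * X) * (3 * (T * X))) := by
        gcongr
        exacts [card_intsAbsLe_le hXT, card_intsAbsLe_le hX, card_intsAbsLe_le hTX]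
    _ = 27 * X ^ 3 := by field_simp; ring

lemma abs_three_mul_mul_sub_sq_le_of_mem_skewBox {X T : ℝ} (hT : 0 < T) {p : ℤ × ℤ × ℤ}
    (hp : p ∈ skewBox X T) : |(3 * p.1 * p.2.2 - p.2.1 ^ 2 : ℝ)| ≤ 4 * X ^ 2 := by
  obtain ⟨b, c, d⟩ := p
  obtain ⟨hb, hc, hd⟩ := mk_mem_skewBox.mp hp
  calc |(3 * b * d - c ^ 2 : ℝ)| ≤ 3 * (|(b : ℝ)| * |(d : ℝ)|) + |(c : ℝ)| ^ 2 := by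
        refine (abs_sub _ _).trans_eq ?_
        simp [abs_mul, mul_assoc]
    _ ≤ 3 * (X / T * (T * X)) + X ^ 2 := by
        gcongr
        exact (abs_nonneg _).trans hb
    _ = 4 * X ^ 2 := by field_simp; ring

lemma injOn_of_quadric_eq_zero :
    Set.InjOn (fun v : ℤ × ℤ × ℤ × ℤ × ℤ => ((v.2.1, v.2.2.1, v.2.2.2.1), v.1))
      {v | v.1 ≠ 0 ∧ 12 * v.1 * v.2.2.2.2 - 3 * v.2.1 * v.2.2.2.1 + v.2.2.1 ^ 2 = 0} := by
  rintro ⟨a, b, c, d, e⟩ ⟨ha, hq⟩ ⟨a', b', c', d', e'⟩ ⟨-, hq'⟩ hvv'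
  simp only [Prod.mk.injEq] at hvv'
  obtain ⟨⟨rfl, rfl, rfl⟩, rfl⟩ := hvv'
  have : e = e' := mul_left_cancel₀ (mul_ne_zero (by norm_num : (12 : ℤ) ≠ 0) ha) (by linarith)
  rw [this]

lemma mem_divisors_of_quadric_eq_zero {a b c d e : ℤ} (ha : a ≠ 0) (he : e ≠ 0)
    (h : 12 * a * e - 3 * b * d + c ^ 2 = 0) : a ∈ (3 * b * d - c ^ 2).divisors := by
  have hfac : 3 * b * d - c ^ 2 = a * (12 * e) := by linarith
  rw [Int.mem_divisors, hfac]
  exact ⟨dvd_mul_right a _, mul_ne_zero ha (mul_ne_zero (by norm_num) he)⟩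

/-- The "tail" estimate, abstract form. For every `ε > 0` there is a constant `C_ε`
(independent of `t`) such that: for all reals `λ, t ≥ 1`, if `S` is a set of integer
tuples `(a,b,c,d,e)` with `a, e ≠ 0`, satisfying the box conditions
`|a| ≤ λ⁴/t⁴`, `|b| ≤ λ⁴/t²`, `|c| ≤ λ⁴`, `|d| ≤ t²λ⁴`, `|e| ≤ t⁴λ⁴`, and the
quadric equation `12ae - 3bd + c² = 0`, then `#S ≤ C_ε · λ^(12+ε)`. -/
theorem tail_estimate (ε : ℝ) (hε : 0 < ε) :
    ∃ Cε : ℝ, 0 < Cε ∧ ∀ lam t : ℝ, 1 ≤ lam → 1 ≤ t →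
      ∀ S : Set (ℤ × ℤ × ℤ × ℤ × ℤ),
        (∀ v ∈ S,
          v.1 ≠ 0 ∧ v.2.2.2.2 ≠ 0 ∧
          |(v.1 : ℝ)| ≤ lam ^ 4 / t ^ 4 ∧
          |(v.2.1 : ℝ)| ≤ lam ^ 4 / t ^ 2 ∧
          |(v.2.2.1 : ℝ)| ≤ lam ^ 4 ∧
          |(v.2.2.2.1 : ℝ)| ≤ t ^ 2 * lam ^ 4 ∧
          |(v.2.2.2.2 : ℝ)| ≤ t ^ 4 * lam ^ 4 ∧
          12 * v.1 * v.2.2.2.2 - 3 * v.2.1 * v.2.2.2.1 + v.2.2.1 ^ 2 = 0) →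
        (S.ncard : ℝ) ≤ Cε * lam ^ (12 + ε) := by
  obtain ⟨C, hC, hdiv⟩ := Int.card_divisors_le_mul_rpow (δ := ε / 8) (by positivity)
  refine ⟨27 * C * 4 ^ (ε / 8), by positivity, fun lam t hlam ht S hS => ?_⟩
  rcases S.eq_empty_or_nonempty with rfl | ⟨v₀, hv₀⟩
  · simp only [Set.ncard_empty, Nat.cast_zero]
    positivity
  -- a single tuple with `a ≠ 0` forces `t ≤ lam`, so every side of the `(b, c, d)`-box is `≥ 1`
  have hbox : 1 ≤ lam ^ 4 / t ^ 2 := by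
    obtain ⟨ha₀, -, ha₀_le, -⟩ := hS v₀ hv₀
    calc (1 : ℝ) ≤ |(v₀.1 : ℝ)| := by exact_mod_cast Int.one_le_abs ha₀
      _ ≤ lam ^ 4 / t ^ 4 := ha₀_le
      _ ≤ lam ^ 4 / t ^ 2 := by gcongr; norm_num [ht]
  have hinj : S.InjOn fun v => ((v.2.1, v.2.2.1, v.2.2.2.1), v.1) :=
    injOn_of_quadric_eq_zero.mono fun v hv =>
      Set.mem_ofPred.mpr ⟨(hS v hv).1, (hS v hv).2.2.2.2.2.2.2⟩
  calc (S.ncard : ℝ) ≤ #(skewBox (lam ^ 4) (t ^ 2)) * (C * (4 * lam ^ 8) ^ (ε / 8)) := by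
        refine Set.ncard_le_card_mul_of_injOn _ hinj _
          (fun p => (3 * p.1 * p.2.2 - p.2.1 ^ 2).divisors) (fun v hv => ?_)
          (fun p hp => (hdiv _).trans ?_)
        · obtain ⟨ha, he, -, hb, hc, hd, -, hq⟩ := hS v hv
          exact ⟨mk_mem_skewBox.mpr ⟨hb, hc, hd⟩, mem_divisors_of_quadric_eq_zero ha he hq⟩
        · gcongr
          exact_mod_cast (abs_three_mul_mul_sub_sq_le_of_mem_skewBox (by positivity) hp).trans_eq
            (by ring)
    _ ≤ 27 * lam ^ 12 * (C * (4 * lam ^ 8) ^ (ε / 8)) := by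
        gcongr
        exact (card_skewBox_le (one_le_pow₀ ht) hbox).trans_eq (by ring)
    _ = 27 * C * 4 ^ (ε / 8) * lam ^ (12 + ε) := by
        rw [Real.mul_rpow (by norm_num) (by positivity),
          ← Real.rpow_natCast_mul (by positivity), Real.rpow_add (by positivity), Real.rpow_ofNat,
          Nat.cast_ofNat, mul_div_cancel₀ _ (by norm_num)]
        field_simp
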